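/- arXiv:math/0009223 — 2 statements merged into one kernel-verified Lean document; each statement's English description precedes it below -/
import Mathlib

section
/- If R : [t₀,∞) → ℝ is differentiable and satisfies R'(t) = (β₂+α)I(t) − (d+ε₂+γ)R(t) where I is continuous and I(t) → ∞ as t → ∞, and β₂+α > 0, d+ε₂+γ > 0, then R(t) → ∞. -/
open Filter Real

/-!
With the integrating factor `exp (a t)`, a solution of `R' = b I - a R` satisfies
`(exp (a t) (R t - c))' = exp (a t) (b I t - a c)`, which is nonnegative once `b I t ≥ a c`.
So from that time `T` on, `R t ≥ c + (R T - c) exp (-a (t - T))`, and for `a > 0` the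
right-hand side tends to `c`. As `I → ∞`, this works for every level `c`.
-/

section IntegratingFactor

variable {R R' : ℝ → ℝ} {a c T : ℝ}

theorem monotoneOn_exp_mul_sub_of_hasDerivAt {s : Set ℝ} (hs : Convex ℝ s)
    (hR : ∀ t ∈ s, HasDerivAt R (R' t) t) (hR' : ∀ t ∈ s, a * c ≤ R' t + a * R t) :
    MonotoneOn (fun t => exp (a * t) * (R t - c)) s := by
  have hderiv : ∀ t ∈ s,
      HasDerivAt (fun t => exp (a * t) * (R t - c)) (exp (a * t) * (R' t + a * R t - a * c)) t := by
    intro t ht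
    have hexp : HasDerivAt (fun t => exp (a * t)) (exp (a * t) * a) t := by
      simpa using ((hasDerivAt_id t).const_mul a).exp
    exact (hexp.mul ((hR t ht).sub_const c)).congr_deriv (by ring)
  refine monotoneOn_of_hasDerivWithinAt_nonneg hs
    (fun t ht => (hderiv t ht).continuousAt.continuousWithinAt)
    (fun t ht => (hderiv t (interior_subset ht)).hasDerivWithinAt) fun t ht => ?_
  have : 0 ≤ R' t + a * R t - a * c := by linarith [hR' t (interior_subset ht)]
  positivity

theorem add_mul_exp_le_of_hasDerivAt (hR : ∀ t ≥ T, HasDerivAt R (R' t) t)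
    (hR' : ∀ t ≥ T, a * c ≤ R' t + a * R t) {t : ℝ} (ht : T ≤ t) :
    c + (R T - c) * exp (-(a * (t - T))) ≤ R t := by
  have hmono := monotoneOn_exp_mul_sub_of_hasDerivAt (convex_Ici T) hR hR'
    Set.self_mem_Ici ht ht
  have hexp : exp (-(a * (t - T))) = exp (a * T) / exp (a * t) := by
    rw [← exp_sub]; ring_nf
  have hpos := exp_pos (a * t)
  rw [hexp, mul_div_assoc', ← le_sub_iff_add_le', div_le_iff₀ hpos]
  simp only at hmono
  linarith

theorem eventually_lt_of_hasDerivAt (ha : 0 < a) (hR : ∀ t ≥ T, HasDerivAt R (R' t) t)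
    (hR' : ∀ t ≥ T, a * c ≤ R' t + a * R t) {M : ℝ} (hM : M < c) :
    ∀ᶠ t in atTop, M < R t := by
  have hdecay : Tendsto (fun t => c + (R T - c) * exp (-(a * (t - T)))) atTop (nhds c) := by
    have hlin : Tendsto (fun t => a * (t - T)) atTop atTop :=
      (tendsto_atTop_add_const_right _ _ tendsto_id).const_mul_atTop ha
    simpa using ((tendsto_exp_neg_atTop_nhds_zero.comp hlin).const_mul (R T - c)).const_add c
  filter_upwards [hdecay.eventually (eventually_gt_nhds hM), eventually_ge_atTop T]
    with t hlt ht
  exact hlt.trans_le (add_mul_exp_le_of_hasDerivAt hR hR' ht)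

end IntegratingFactor

theorem removed_class_growth_general
    (β2 α d ε2 γ t0 : ℝ) (hβα : 0 < β2 + α) (hd : 0 < d + ε2 + γ)
    (R I : ℝ → ℝ)
    (hR_ode : ∀ t ≥ t0, HasDerivAt R ((β2 + α) * I t - (d + ε2 + γ) * R t) t)
    (hI_lim : Tendsto I atTop atTop) :
    Tendsto R atTop atTop := by
  refine tendsto_atTop.2 fun M => ?_
  obtain ⟨T, hT⟩ := eventually_atTop.1 <|
    (hI_lim.eventually_ge_atTop ((d + ε2 + γ) * (M + 1) / (β2 + α))).and
      (eventually_ge_atTop t0)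
  refine (eventually_lt_of_hasDerivAt hd (fun t ht => hR_ode t (hT t ht).2)
    (fun t ht => ?_) (lt_add_one M)).mono fun _ => le_of_lt
  have := (div_le_iff₀' hβα).1 (hT t ht).1
  linarith

/-- If R' = (β₂+α)I − (d+ε₂+γ)R with I continuous, I(t) → ∞, β₂+α > 0 and
d+ε₂+γ > 0, then R(t) → ∞. -/
theorem removed_class_growth
    (β2 α d ε2 γ t0 : ℝ) (hβα : 0 < β2 + α) (hd : 0 < d + ε2 + γ)
    (R I : ℝ → ℝ)
    (hI_cont : ContinuousOn I (Set.Ici t0))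
    (hR_ode : ∀ t ≥ t0, HasDerivAt R ((β2 + α) * I t - (d + ε2 + γ) * R t) t)
    (hI_lim : Tendsto I atTop atTop) :
    Tendsto R atTop atTop :=
  removed_class_growth_general β2 α d ε2 γ t0 hβα hd R I hR_ode hI_lim
end

section
/- The Dulac-type functional: in the open triangle {s>0, i>0, r>0, s+i+r=1}, the vector field g defined from the proportions system satisfies (curl g)·(1,1,1) = −(b₁/(s²r) + (b₂+γ)/(s²i) + (β₂+α)/(sr²)), which is strictly negative whenever b₁ > 0 or b₂+γ > 0 or β₂+α > 0. -/
/-- Right-hand sides of the proportions system restricted to the plane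
s + i + r = 1, written as functions of (s, i) with r = 1 − s − i. -/
def propF1 (b0 b1 b2 β ε1 ε2 γ lam : ℝ) (s i : ℝ) : ℝ :=
  b0 * s + b1 * i + (b2 + γ) * (1 - s - i) - b0 * s ^ 2
    - (b1 + β + lam - ε1) * i * s - (b2 - ε2) * s * (1 - s - i)

def propF2 (b0 b1 b2 β β1 ε1 ε2 lam α : ℝ) (s i : ℝ) : ℝ :=
  (β1 - ε1 - α) * i + (lam - b0) * i * s - (b1 + β - ε1) * i ^ 2
    - (b2 - ε2) * i * (1 - s - i)

def propF3 (b0 b1 b2 β β2 ε1 ε2 γ α : ℝ) (s i : ℝ) : ℝ :=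
  (β2 + α) * i - (ε2 + γ) * (1 - s - i) - b0 * s * (1 - s - i)
    - (b1 + β - ε1) * i * (1 - s - i) - (b2 - ε2) * (1 - s - i) ^ 2

/-- The Dulac-type vector field g = g₁ + g₂ + g₃ of the paper, as a map of
(s,i) into ℝ³ (with r = 1 − s − i). -/
noncomputable def dulacG (b0 b1 b2 β β1 β2 ε1 ε2 γ lam α : ℝ) (s i : ℝ) : Fin 3 → ℝ :=
  ![propF3 b0 b1 b2 β β2 ε1 ε2 γ α s i / (s * (1 - s - i))
      - propF2 b0 b1 b2 β β1 ε1 ε2 lam α s i / (s * i),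
    propF1 b0 b1 b2 β ε1 ε2 γ lam s i / (s * i)
      - propF3 b0 b1 b2 β β2 ε1 ε2 γ α s i / (i * (1 - s - i)),
    propF2 b0 b1 b2 β β1 ε1 ε2 lam α s i / (i * (1 - s - i))
      - propF1 b0 b1 b2 β ε1 ε2 γ lam s i / (s * (1 - s - i))]

/-!
Because f₁ + f₂ + f₃ = 0 and s + i + r = 1, the two combinations of g entering the surface curl
collapse to g·(0,1,−1) = f₁/(sir) and g·(1,0,−1) = −f₂/(sir). Hence (curl g)·(1,1,1) is the
divergence ∂ₛ(f₁/(sir)) + ∂ᵢ(f₂/(sir)) of the planar field (f₁, f₂) with Dulac multiplier 1/(sir),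
and what remains is an identity of rational functions.
-/

open Set Topology

section Dulac

variable {b0 b1 b2 β β1 β2 ε1 ε2 γ lam α : ℝ}

theorem propF3_eq_neg_propF1_add_propF2 (hβ : β = β1 + β2) (s i : ℝ) :
    propF3 b0 b1 b2 β β2 ε1 ε2 γ α s i
      = -(propF1 b0 b1 b2 β ε1 ε2 γ lam s i + propF2 b0 b1 b2 β β1 ε1 ε2 lam α s i) := by
  subst hβ
  unfold propF1 propF2 propF3
  ring

theorem dulacG_one_sub_dulacG_two (hβ : β = β1 + β2) {s i : ℝ} (hs : s ≠ 0) (hi : i ≠ 0)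
    (hr : 1 - s - i ≠ 0) :
    dulacG b0 b1 b2 β β1 β2 ε1 ε2 γ lam α s i 1 - dulacG b0 b1 b2 β β1 β2 ε1 ε2 γ lam α s i 2
      = propF1 b0 b1 b2 β ε1 ε2 γ lam s i / (s * i * (1 - s - i)) := by
  simp only [dulacG, Fin.isValue, Matrix.cons_val_one, Matrix.cons_val_zero, Matrix.cons_val]
  rw [propF3_eq_neg_propF1_add_propF2 hβ]
  field_simp
  ring

theorem dulacG_zero_sub_dulacG_two (hβ : β = β1 + β2) {s i : ℝ} (hs : s ≠ 0) (hi : i ≠ 0)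
    (hr : 1 - s - i ≠ 0) :
    dulacG b0 b1 b2 β β1 β2 ε1 ε2 γ lam α s i 0 - dulacG b0 b1 b2 β β1 β2 ε1 ε2 γ lam α s i 2
      = -(propF2 b0 b1 b2 β β1 ε1 ε2 lam α s i / (s * i * (1 - s - i))) := by
  simp only [dulacG, Fin.isValue, Matrix.cons_val_zero, Matrix.cons_val]
  rw [propF3_eq_neg_propF1_add_propF2 hβ]
  field_simp
  ring

theorem hasDerivAt_propF1_fst (s i : ℝ) :
    HasDerivAt (fun x => propF1 b0 b1 b2 β ε1 ε2 γ lam x i)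
      (b0 - (b2 + γ) - 2 * b0 * s - (b1 + β + lam - ε1) * i - (b2 - ε2) * (1 - 2 * s - i)) s := by
  have hx := hasDerivAt_id' s
  have hr : HasDerivAt (fun x => 1 - x - i) (-1) s := (hx.const_sub 1).sub_const i
  unfold propF1
  refine ((((((hx.const_mul b0).add_const (b1 * i)).fun_add (hr.const_mul (b2 + γ))).fun_sub
    ((hx.fun_pow 2).const_mul b0)).fun_sub (hx.const_mul ((b1 + β + lam - ε1) * i))).fun_sub
    ((hx.const_mul (b2 - ε2)).fun_mul hr)).congr_deriv ?_
  norm_num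
  ring

theorem hasDerivAt_propF2_snd (s i : ℝ) :
    HasDerivAt (fun y => propF2 b0 b1 b2 β β1 ε1 ε2 lam α s y)
      (β1 - ε1 - α + (lam - b0) * s - 2 * (b1 + β - ε1) * i - (b2 - ε2) * (1 - s - 2 * i)) i := by
  have hy := hasDerivAt_id' i
  have hr : HasDerivAt (fun y => 1 - s - y) (-1) i := hy.const_sub (1 - s)
  unfold propF2
  refine ((((hy.const_mul (β1 - ε1 - α)).fun_add ((hy.const_mul (lam - b0)).mul_const s)).fun_sub
    ((hy.fun_pow 2).const_mul (b1 + β - ε1))).fun_sub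
    ((hy.const_mul (b2 - ε2)).fun_mul hr)).congr_deriv ?_
  norm_num
  ring

theorem deriv_add_deriv_dulac_quotients (hβ : β = β1 + β2) {s i : ℝ} (hs : s ≠ 0) (hi : i ≠ 0)
    (hr : 1 - s - i ≠ 0) :
    deriv (fun x => propF1 b0 b1 b2 β ε1 ε2 γ lam x i / (x * i * (1 - x - i))) s
      + deriv (fun y => propF2 b0 b1 b2 β β1 ε1 ε2 lam α s y / (s * y * (1 - s - y))) i
      = -(b1 / (s ^ 2 * (1 - s - i)) + (b2 + γ) / (s ^ 2 * i)
          + (β2 + α) / (s * (1 - s - i) ^ 2)) := by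
  have hx := hasDerivAt_id' s
  have hy := hasDerivAt_id' i
  have hDx : HasDerivAt (fun x => x * i * (1 - x - i)) (i * (1 - 2 * s - i)) s :=
    ((hx.mul_const i).fun_mul ((hx.const_sub 1).sub_const i)).congr_deriv (by ring)
  have hDy : HasDerivAt (fun y => s * y * (1 - s - y)) (s * (1 - s - 2 * i)) i :=
    ((hy.const_mul s).fun_mul (hy.const_sub (1 - s))).congr_deriv (by ring)
  rw [((hasDerivAt_propF1_fst s i).fun_div hDx (by positivity)).deriv,
    ((hasDerivAt_propF2_snd s i).fun_div hDy (by positivity)).deriv]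
  subst hβ
  unfold propF1 propF2
  field_simp
  ring

end Dulac

theorem div_add_div_add_div_pos {a b c p q t : ℝ} (ha : 0 ≤ a) (hb : 0 ≤ b) (hc : 0 ≤ c)
    (habc : 0 < a + b + c) (hp : 0 < p) (hq : 0 < q) (ht : 0 < t) :
    0 < a / p + b / q + c / t := by
  rcases (show 0 < a ∨ 0 < b ∨ 0 < c by by_contra!; linarith) with h | h | h <;> positivity

theorem dulac_curl_identity_general
    (b0 b1 b2 β β1 β2 γ lam ε1 ε2 α : ℝ)
    (hb1 : 0 ≤ b1) (hb2 : 0 ≤ b2) (hβ2 : 0 ≤ β2)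
    (hγ : 0 ≤ γ) (hα : 0 ≤ α)
    (hβ : β = β1 + β2) (hpos : 0 < b1 + (b2 + γ) + (β2 + α))
    (s i : ℝ) (hs : 0 < s) (hi : 0 < i) (hr : 0 < 1 - s - i) :
    deriv (fun x => dulacG b0 b1 b2 β β1 β2 ε1 ε2 γ lam α x i 1
        - dulacG b0 b1 b2 β β1 β2 ε1 ε2 γ lam α x i 2) s
      - deriv (fun y => dulacG b0 b1 b2 β β1 β2 ε1 ε2 γ lam α s y 0
        - dulacG b0 b1 b2 β β1 β2 ε1 ε2 γ lam α s y 2) i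
      = -(b1 / (s ^ 2 * (1 - s - i)) + (b2 + γ) / (s ^ 2 * i)
          + (β2 + α) / (s * (1 - s - i) ^ 2)) ∧
    -(b1 / (s ^ 2 * (1 - s - i)) + (b2 + γ) / (s ^ 2 * i)
        + (β2 + α) / (s * (1 - s - i) ^ 2)) < 0 := by
  have hx : (fun x => dulacG b0 b1 b2 β β1 β2 ε1 ε2 γ lam α x i 1
      - dulacG b0 b1 b2 β β1 β2 ε1 ε2 γ lam α x i 2)
      =ᶠ[𝓝 s] fun x => propF1 b0 b1 b2 β ε1 ε2 γ lam x i / (x * i * (1 - x - i)) := by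
    filter_upwards [Ioo_mem_nhds hs (show s < 1 - i by linarith)] with x hx
    exact dulacG_one_sub_dulacG_two hβ hx.1.ne' hi.ne' (by linarith [hx.2])
  have hy : (fun y => dulacG b0 b1 b2 β β1 β2 ε1 ε2 γ lam α s y 0
      - dulacG b0 b1 b2 β β1 β2 ε1 ε2 γ lam α s y 2)
      =ᶠ[𝓝 i] fun y => -(propF2 b0 b1 b2 β β1 ε1 ε2 lam α s y / (s * y * (1 - s - y))) := by
    filter_upwards [Ioo_mem_nhds hi (show i < 1 - s by linarith)] with y hy
    exact dulacG_zero_sub_dulacG_two hβ hs.ne' hy.1.ne' (by linarith [hy.2])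
  rw [hx.deriv_eq, hy.deriv_eq, deriv.fun_neg, sub_neg_eq_add,
    deriv_add_deriv_dulac_quotients hβ hs.ne' hi.ne' hr.ne']
  exact ⟨rfl, neg_neg_of_pos (div_add_div_add_div_pos hb1 (add_nonneg hb2 hγ) (add_nonneg hβ2 hα)
    hpos (by positivity) (by positivity) (by positivity))⟩

/-- On the open simplex {s>0, i>0, r>0, s+i+r=1} (with r = 1−s−i), the surface
curl of the Dulac field satisfies
(curl g)·(1,1,1) = ∂/∂s (g·(0,1,−1)) − ∂/∂i (g·(1,0,−1))
  = −(b₁/(s²r) + (b₂+γ)/(s²i) + (β₂+α)/(sr²)) < 0. -/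
theorem dulac_curl_identity
    (b0 b1 b2 β β1 β2 γ lam ε1 ε2 α : ℝ)
    (hb0 : 0 ≤ b0) (hb1 : 0 ≤ b1) (hb2 : 0 ≤ b2) (hβ1 : 0 ≤ β1) (hβ2 : 0 ≤ β2)
    (hγ : 0 ≤ γ) (hlam : 0 ≤ lam) (hε1 : 0 ≤ ε1) (hε2 : 0 ≤ ε2) (hα : 0 ≤ α)
    (hβ : β = β1 + β2) (hpos : 0 < b1 + (b2 + γ) + (β2 + α))
    (s i : ℝ) (hs : 0 < s) (hi : 0 < i) (hr : 0 < 1 - s - i) :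
    deriv (fun x => dulacG b0 b1 b2 β β1 β2 ε1 ε2 γ lam α x i 1
        - dulacG b0 b1 b2 β β1 β2 ε1 ε2 γ lam α x i 2) s
      - deriv (fun y => dulacG b0 b1 b2 β β1 β2 ε1 ε2 γ lam α s y 0
        - dulacG b0 b1 b2 β β1 β2 ε1 ε2 γ lam α s y 2) i
      = -(b1 / (s ^ 2 * (1 - s - i)) + (b2 + γ) / (s ^ 2 * i)
          + (β2 + α) / (s * (1 - s - i) ^ 2)) ∧
    -(b1 / (s ^ 2 * (1 - s - i)) + (b2 + γ) / (s ^ 2 * i)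
        + (β2 + α) / (s * (1 - s - i) ^ 2)) < 0 :=
  dulac_curl_identity_general b0 b1 b2 β β1 β2 γ lam ε1 ε2 α hb1 hb2 hβ2 hγ hα hβ hpos s i hs hi hr
end
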